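/- For a parameter α, define the polynomials x_0 = 12α⁴ + 5α² − 1, x_1 = 8α⁵ + 8α⁴ + 22α³ − 2α² + 2α + 2, x_2 = −8α⁵ − 4α⁴ + 2α³ − 11α² − 2α − 1, x_3 = 8α⁵ − 10α³ − 6α, x_4 = 8α⁵ − 4α⁴ − 2α³ − 11α² + 2α − 1, x_5 = −8α⁵ + 8α⁴ − 22α³ − 2α² − 2α + 2. Then for every α in any commutative ring the identities x_{i+2}² − 2x_{i+1}² + x_i² = 2x_0² hold for i = 1, 2, 3; moreover, for infinitely many α ∈ ℚ the resulting point is a non-trivial rational point of the Büchi K3 surface X_5, i.e., there is no t ∈ ℚ with x_i² = (t+i)²·x_0² for all i ∈ {1,…,5}. -/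

import Mathlib

/-- `x₀ = 12α⁴ + 5α² − 1`. -/
def buchiX0 {R : Type*} [CommRing R] (α : R) : R := 12 * α ^ 4 + 5 * α ^ 2 - 1

/-- `x₁ = 8α⁵ + 8α⁴ + 22α³ − 2α² + 2α + 2`. -/
def buchiX1 {R : Type*} [CommRing R] (α : R) : R :=
  8 * α ^ 5 + 8 * α ^ 4 + 22 * α ^ 3 - 2 * α ^ 2 + 2 * α + 2

/-- `x₂ = −8α⁵ − 4α⁴ + 2α³ − 11α² − 2α − 1`. -/
def buchiX2 {R : Type*} [CommRing R] (α : R) : R :=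
  -8 * α ^ 5 - 4 * α ^ 4 + 2 * α ^ 3 - 11 * α ^ 2 - 2 * α - 1

/-- `x₃ = 8α⁵ − 10α³ − 6α`. -/
def buchiX3 {R : Type*} [CommRing R] (α : R) : R :=
  8 * α ^ 5 - 10 * α ^ 3 - 6 * α

/-- `x₄ = 8α⁵ − 4α⁴ − 2α³ − 11α² + 2α − 1`. -/
def buchiX4 {R : Type*} [CommRing R] (α : R) : R :=
  8 * α ^ 5 - 4 * α ^ 4 - 2 * α ^ 3 - 11 * α ^ 2 + 2 * α - 1

/-- `x₅ = −8α⁵ + 8α⁴ − 22α³ − 2α² − 2α + 2`. -/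
def buchiX5 {R : Type*} [CommRing R] (α : R) : R :=
  -8 * α ^ 5 + 8 * α ^ 4 - 22 * α ^ 3 - 2 * α ^ 2 - 2 * α + 2

/-!
On a trivial point `x₁ = ±(t+1)x₀` and `x₂ = ±(t+2)x₀`, so `x₂ = ±x₁ ± x₀`; hence the polynomial
`P = (x₂² − (x₁ + x₀)²)(x₂² − (x₁ − x₀)²)` in `α` vanishes there. Since `P(2) ≠ 0`, `P` is a nonzero
polynomial with finitely many roots, and every other rational `α` gives a non-trivial point.
-/

open Polynomial

theorem buchi_quadrics {R : Type*} [CommRing R] (α : R) :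
    (buchiX3 α) ^ 2 - 2 * (buchiX2 α) ^ 2 + (buchiX1 α) ^ 2 = 2 * (buchiX0 α) ^ 2 ∧
      (buchiX4 α) ^ 2 - 2 * (buchiX3 α) ^ 2 + (buchiX2 α) ^ 2 = 2 * (buchiX0 α) ^ 2 ∧
      (buchiX5 α) ^ 2 - 2 * (buchiX4 α) ^ 2 + (buchiX3 α) ^ 2 = 2 * (buchiX0 α) ^ 2 := by
  simp only [buchiX0, buchiX1, buchiX2, buchiX3, buchiX4, buchiX5]
  exact ⟨by ring, by ring, by ring⟩

theorem sq_sub_sq_mul_sq_sub_sq_eq_zero_of_consecutive {R : Type*} [CommRing R] {a b c s : R}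
    (ha : a ^ 2 = s ^ 2 * c ^ 2) (hb : b ^ 2 = (s + 1) ^ 2 * c ^ 2) :
    (b ^ 2 - (a + c) ^ 2) * (b ^ 2 - (a - c) ^ 2) = 0 := by
  linear_combination (a ^ 2 + s ^ 2 * c ^ 2 - 2 * (s + 1) ^ 2 * c ^ 2 - 2 * c ^ 2) * ha +
    (b ^ 2 + (s + 1) ^ 2 * c ^ 2 - 2 * a ^ 2 - 2 * c ^ 2) * hb

def buchiObstruction {R : Type*} [CommRing R] (α : R) : R :=
  ((buchiX2 α) ^ 2 - (buchiX1 α + buchiX0 α) ^ 2) * ((buchiX2 α) ^ 2 - (buchiX1 α - buchiX0 α) ^ 2)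

theorem buchiObstruction_eq_zero_of_trivial {R : Type*} [CommRing R] {α t : R}
    (h₁ : (buchiX1 α) ^ 2 = (t + 1) ^ 2 * (buchiX0 α) ^ 2)
    (h₂ : (buchiX2 α) ^ 2 = (t + 2) ^ 2 * (buchiX0 α) ^ 2) :
    buchiObstruction α = 0 :=
  sq_sub_sq_mul_sq_sub_sq_eq_zero_of_consecutive h₁ (by rw [h₂]; ring)

theorem eval_buchiObstruction_X {R : Type*} [CommRing R] (α : R) :
    (buchiObstruction (X : R[X])).eval α = buchiObstruction α := by
  simp [buchiObstruction, buchiX0, buchiX1, buchiX2]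

theorem buchiObstruction_two {R : Type*} [CommRing R] [CharZero R] :
    buchiObstruction (2 : R) ≠ 0 := by
  norm_num [buchiObstruction, buchiX0, buchiX1, buchiX2]

theorem infinite_setOf_buchiObstruction_ne_zero {R : Type*} [CommRing R] [IsDomain R]
    [CharZero R] : {α : R | buchiObstruction α ≠ 0}.Infinite := by
  have hP : buchiObstruction (X : R[X]) ≠ 0 := fun h ↦
    buchiObstruction_two (R := R) (by rw [← eval_buchiObstruction_X, h, eval_zero])
  have hroots := (finite_setOfPred_isRoot hP).infinite_compl
  simpa [Set.compl_ofPred, eval_buchiObstruction_X] using hroots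

/-- The explicit one-parameter family of points of the Büchi K3 surface:
for every `α` in any commutative ring the three Büchi quadric identities
hold, and for infinitely many `α ∈ ℚ` the resulting rational point is
non-trivial, i.e. there is no `t ∈ ℚ` with `x_i² = (t+i)²·x₀²` for
all `i ∈ {1,…,5}`. -/
theorem buchi_one_parameter_family :
    (∀ (R : Type) [CommRing R] (α : R),
      (buchiX3 α) ^ 2 - 2 * (buchiX2 α) ^ 2 + (buchiX1 α) ^ 2
          = 2 * (buchiX0 α) ^ 2 ∧
      (buchiX4 α) ^ 2 - 2 * (buchiX3 α) ^ 2 + (buchiX2 α) ^ 2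
          = 2 * (buchiX0 α) ^ 2 ∧
      (buchiX5 α) ^ 2 - 2 * (buchiX4 α) ^ 2 + (buchiX3 α) ^ 2
          = 2 * (buchiX0 α) ^ 2) ∧
    {α : ℚ | ¬ ∃ t : ℚ,
      (buchiX1 α) ^ 2 = (t + 1) ^ 2 * (buchiX0 α) ^ 2 ∧
      (buchiX2 α) ^ 2 = (t + 2) ^ 2 * (buchiX0 α) ^ 2 ∧
      (buchiX3 α) ^ 2 = (t + 3) ^ 2 * (buchiX0 α) ^ 2 ∧
      (buchiX4 α) ^ 2 = (t + 4) ^ 2 * (buchiX0 α) ^ 2 ∧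
      (buchiX5 α) ^ 2 = (t + 5) ^ 2 * (buchiX0 α) ^ 2}.Infinite := by
  refine ⟨fun _ _ α ↦ buchi_quadrics α, infinite_setOf_buchiObstruction_ne_zero.mono ?_⟩
  rintro α hα ⟨t, h₁, h₂, -⟩
  exact hα (buchiObstruction_eq_zero_of_trivial h₁ h₂)
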